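/- Let H be a Hermitian matrix with Gibbs state ρ = e^{−βH}/Tr(e^{−βH}), and let Q(O,G,A,K) be the identifiability observable defined below. Then Q(O, G, A, H) = 0 for every Hermitian G and all matrices O, A. -/

import Mathlib

open Matrix Real Complex MeasureTheory

variable {m : ℕ}

/-- The Gibbs state `ρ_β(H) = e^{-βH}/Tr(e^{-βH})`. -/
noncomputable def gibbs (β : ℝ) (H : Matrix (Fin m) (Fin m) ℂ) : Matrix (Fin m) (Fin m) ℂ :=
  ((NormedSpace.exp ((-(β : ℂ)) • H)).trace.re)⁻¹ • NormedSpace.exp ((-(β : ℂ)) • H)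

/-- Heisenberg evolution `X_K(t) = e^{iKt} X e^{-iKt}`. -/
noncomputable def heis (K : Matrix (Fin m) (Fin m) ℂ) (t : ℝ)
    (X : Matrix (Fin m) (Fin m) ℂ) : Matrix (Fin m) (Fin m) ℂ :=
  NormedSpace.exp ((Complex.I * t) • K) * X * NormedSpace.exp ((-(Complex.I * t)) • K)

/-- The filter function `g(t) = −π^{3/2}/(2√2 (1 + cosh(πt)))`. -/
noncomputable def gFilter (t : ℝ) : ℝ :=
  -(π ^ ((3 : ℝ) / 2)) / (2 * Real.sqrt 2 * (1 + Real.cosh (π * t)))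

/-- The Gaussian weight `f(t) = e^{-σ²t²} √(σ√(2/π))`. -/
noncomputable def gaussWeight (σ t : ℝ) : ℝ :=
  Real.exp (-(σ ^ 2 * t ^ 2)) * Real.sqrt (σ * Real.sqrt (2 / π))

/-- The time-domain kernel `h₊` arising from the frequency-truncated imaginary-time
conjugation `∫_{|ω'|≤Ω} √ρ_K Â_K(ω') √(ρ_K⁻¹) dω' = (2π)^{-1/2}∫ A_K(t') h₊(t') dt'`. -/
noncomputable def hPlus (σ β Ω t : ℝ) : ℂ :=
  (gaussWeight σ t : ℂ) *
    ∫ ω' in (-Ω)..Ω,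
      Complex.exp (-(Complex.I * ((ω' : ℂ) - σ ^ 2 * β) * t)) *
        (Real.exp (-(β * ω') / 2 + σ ^ 2 * β ^ 2 / 4) : ℂ)

/-- The time-domain kernel `h₋` arising from
`∫_{|ω'|≤Ω} √(ρ_K⁻¹) Â_K(ω') √ρ_K dω' = (2π)^{-1/2}∫ A_K(t') h₋(t') dt'`. -/
noncomputable def hMinus (σ β Ω t : ℝ) : ℂ :=
  (gaussWeight σ t : ℂ) *
    ∫ ω' in (-Ω)..Ω,
      Complex.exp (-(Complex.I * ((ω' : ℂ) + σ ^ 2 * β) * t)) *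
        (Real.exp ((β * ω') / 2 + σ ^ 2 * β ^ 2 / 4) : ℂ)

/-- The identifiability observable
`Q(O,G,A,K) = (2π)^{-1/2} ∫∫ Tr[O†_G(t)(h₊(t') A_K(t'+t) ρ − h₋(t') ρ A_K(t'+t))]
g_β(t) dt' dt`, where `ρ` is the Gibbs state of the ground-truth Hamiltonian `H` and
`g_β(t) = (2/β) g(2t/β)`. -/
noncomputable def Qobs (σ Ω β : ℝ) (H G K O A : Matrix (Fin m) (Fin m) ℂ) : ℂ :=
  ((Real.sqrt (2 * π) : ℂ))⁻¹ *
    ∫ t : ℝ,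
      (∫ t' : ℝ,
        ((heis G t Oᴴ) *
            (hPlus σ β Ω t' • (heis K (t' + t) A * gibbs β H) -
              hMinus σ β Ω t' • (gibbs β H * heis K (t' + t) A))).trace) *
        (((2 / β) * gFilter (2 * t / β) : ℝ) : ℂ)

/-!
In the eigenbasis of `H`, the `(j, i)` entry of `h₊(t') A_H(t'+t) ρ - h₋(t') ρ A_H(t'+t)` is a
constant times `e^{i(λⱼ-λᵢ)t'} (e^{-βλᵢ} h₊(t') - e^{-βλⱼ} h₋(t'))`. By Fubini the `t'`-integral of
this scalar function is an integral over `|ω| ≤ Ω` of Gaussian Fourier transforms, and for each `ω`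
the two terms cancel: the Gaussian `e^{-(ν - ω ± σ²β)²/4σ²}` converts the Boltzmann factor
`e^{-βλᵢ ∓ βω/2}` into `e^{-βλⱼ ± βω/2}` exactly when `ν = λⱼ - λᵢ`. So the inner integral of `Qobs`
vanishes for every `t`.
-/

open scoped Interval

section GaussianFilter

variable {σ : ℝ}

@[fun_prop]
lemma continuous_gaussWeight : Continuous (gaussWeight σ) := by
  unfold gaussWeight
  fun_prop

lemma integrable_gaussWeight (hσ : σ ≠ 0) : Integrable (gaussWeight σ) := by
  unfold gaussWeight
  simp_rw [neg_mul_eq_neg_mul (σ ^ 2)]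
  exact (integrable_exp_neg_mul_sq (by positivity)).mul_const _

noncomputable def gaussWeightFT (σ : ℝ) (κ : ℂ) : ℂ :=
  ∫ t : ℝ, gaussWeight σ t * cexp (I * κ * t)

lemma gaussWeightFT_eq (hσ : σ ≠ 0) (κ : ℂ) :
    gaussWeightFT σ κ = gaussWeightFT σ 0 * cexp (-κ ^ 2 / (4 * σ ^ 2)) := by
  have hb : 0 < ((σ : ℂ) ^ 2).re := by norm_cast; positivity
  have key : ∀ κ : ℂ, gaussWeightFT σ κ = Real.sqrt (σ * Real.sqrt (2 / π)) *
      ((π / (σ : ℂ) ^ 2) ^ (1 / 2 : ℂ) * cexp (-κ ^ 2 / (4 * σ ^ 2))) := by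
    intro κ
    rw [← fourierIntegral_gaussian hb, gaussWeightFT, ← integral_const_mul]
    congr 1 with t
    simp only [gaussWeight]
    push_cast
    rw [neg_mul]
    ring
  rw [key κ, key 0]
  simp only [ne_eq, OfNat.ofNat_ne_zero, not_false_eq_true, zero_pow, neg_zero, zero_div,
    Complex.exp_zero, mul_one, mul_assoc]

noncomputable def bandKernel (σ a b c : ℝ) (w : ℝ → ℂ) (t : ℝ) : ℂ :=
  gaussWeight σ t * ∫ ω in a..b, cexp (-(I * (ω - c) * t)) * w ω

lemma hPlus_eq_bandKernel (β Ω : ℝ) :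
    hPlus σ β Ω = bandKernel σ (-Ω) Ω (σ ^ 2 * β)
      (fun ω => Real.exp (-(β * ω) / 2 + σ ^ 2 * β ^ 2 / 4)) := by
  ext t
  simp only [hPlus, bandKernel]
  push_cast
  rfl

lemma hMinus_eq_bandKernel (β Ω : ℝ) :
    hMinus σ β Ω = bandKernel σ (-Ω) Ω (-(σ ^ 2 * β))
      (fun ω => Real.exp (β * ω / 2 + σ ^ 2 * β ^ 2 / 4)) := by
  ext t
  simp only [hMinus, bandKernel]
  push_cast
  simp only [sub_neg_eq_add]

variable {a b c : ℝ} {w : ℝ → ℂ}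

lemma cexp_mul_bandKernel (ν t : ℝ) :
    cexp (I * ν * t) * bandKernel σ a b c w t = bandKernel σ a b (c + ν) w t := by
  simp only [bandKernel, ← intervalIntegral.integral_const_mul]
  congr 1 with ω
  rw [mul_left_comm, ← mul_assoc (cexp _), ← Complex.exp_add]
  push_cast
  ring_nf

lemma integrable_bandIntegrand (hσ : σ ≠ 0) (hw : IntervalIntegrable w volume a b) :
    Integrable (fun p : ℝ × ℝ => (gaussWeight σ p.1 : ℂ) * (cexp (-(I * (p.2 - c) * p.1)) * w p.2))
      (volume.prod (volume.restrict (Ι a b))) := by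
  rw [intervalIntegrable_iff] at hw
  refine ((integrable_gaussWeight hσ).mul_prod hw.norm).mono' ?_ (.of_forall fun p => ?_)
  · simp_rw [← mul_assoc]
    exact (by fun_prop : Continuous fun p : ℝ × ℝ =>
      (gaussWeight σ p.1 : ℂ) * cexp (-(I * (p.2 - c) * p.1))).aestronglyMeasurable.mul
      hw.aestronglyMeasurable.comp_snd
  · have hphase : ‖cexp (-(I * (p.2 - c) * p.1))‖ = 1 := by
      rw [Complex.norm_exp]
      simp
    rw [norm_mul, norm_mul, hphase, one_mul, Complex.norm_real,
      Real.norm_of_nonneg (by unfold gaussWeight; positivity)]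

lemma bandKernel_eq_integral_uIoc (t : ℝ) :
    bandKernel σ a b c w t = (if a ≤ b then 1 else -1 : ℂ) *
      ∫ ω in Ι a b, (gaussWeight σ t : ℂ) * (cexp (-(I * (ω - c) * t)) * w ω) := by
  rw [bandKernel, intervalIntegral.intervalIntegral_eq_integral_uIoc, integral_const_mul]
  split_ifs <;> simp

lemma integrable_bandKernel (hσ : σ ≠ 0) (hw : IntervalIntegrable w volume a b) :
    Integrable (bandKernel σ a b c w) := by
  simp_rw [funext bandKernel_eq_integral_uIoc]
  exact (integrable_bandIntegrand hσ hw).integral_prod_left.const_mul _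

lemma integral_bandKernel (hσ : σ ≠ 0) (hw : IntervalIntegrable w volume a b) :
    ∫ t, bandKernel σ a b c w t = ∫ ω in a..b, gaussWeightFT σ (c - ω) * w ω := by
  simp_rw [bandKernel_eq_integral_uIoc, intervalIntegral.intervalIntegral_eq_integral_uIoc]
  rw [integral_const_mul, integral_integral_swap (integrable_bandIntegrand hσ hw)]
  split_ifs <;> simp only [one_smul, one_mul, neg_smul, neg_one_mul, neg_inj] <;>
  · congr 1 with ω
    rw [gaussWeightFT, ← integral_mul_const]
    congr 1 with t
    rw [← mul_assoc]
    congr 3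
    ring

variable (β Ω μp μq : ℝ)

lemma cexp_mul_hPlus_sub_hMinus_eq (t : ℝ) :
    cexp (I * (μq - μp : ℝ) * t) *
        (cexp (-(β * μp)) * hPlus σ β Ω t - cexp (-(β * μq)) * hMinus σ β Ω t) =
      cexp (-(β * μp)) * bandKernel σ (-Ω) Ω (σ ^ 2 * β + (μq - μp))
          (fun ω => Real.exp (-(β * ω) / 2 + σ ^ 2 * β ^ 2 / 4)) t -
        cexp (-(β * μq)) * bandKernel σ (-Ω) Ω (-(σ ^ 2 * β) + (μq - μp))
          (fun ω => Real.exp (β * ω / 2 + σ ^ 2 * β ^ 2 / 4)) t := by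
  rw [← cexp_mul_bandKernel, ← cexp_mul_bandKernel, ← hPlus_eq_bandKernel, ← hMinus_eq_bandKernel]
  ring

lemma integrable_cexp_mul_hPlus_sub_hMinus (hσ : σ ≠ 0) :
    Integrable fun t : ℝ => cexp (I * (μq - μp : ℝ) * t) *
      (cexp (-(β * μp)) * hPlus σ β Ω t - cexp (-(β * μq)) * hMinus σ β Ω t) := by
  simp_rw [cexp_mul_hPlus_sub_hMinus_eq]
  exact ((integrable_bandKernel hσ (Continuous.intervalIntegrable (by fun_prop) _ _)).const_mul _).sub
    ((integrable_bandKernel hσ (Continuous.intervalIntegrable (by fun_prop) _ _)).const_mul _)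

lemma integral_cexp_mul_hPlus_sub_hMinus (hσ : σ ≠ 0) :
    ∫ t : ℝ, cexp (I * (μq - μp : ℝ) * t) *
      (cexp (-(β * μp)) * hPlus σ β Ω t - cexp (-(β * μq)) * hMinus σ β Ω t) = 0 := by
  have hwPlus : IntervalIntegrable (fun ω : ℝ => (Real.exp (-(β * ω) / 2 + σ ^ 2 * β ^ 2 / 4) : ℂ))
      volume (-Ω) Ω := (by fun_prop : Continuous _).intervalIntegrable _ _
  have hwMinus : IntervalIntegrable (fun ω : ℝ => (Real.exp (β * ω / 2 + σ ^ 2 * β ^ 2 / 4) : ℂ))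
      volume (-Ω) Ω := (by fun_prop : Continuous _).intervalIntegrable _ _
  simp_rw [cexp_mul_hPlus_sub_hMinus_eq]
  rw [integral_sub ((integrable_bandKernel hσ hwPlus).const_mul _)
      ((integrable_bandKernel hσ hwMinus).const_mul _), integral_const_mul, integral_const_mul,
    integral_bandKernel hσ hwPlus, integral_bandKernel hσ hwMinus,
    ← intervalIntegral.integral_const_mul, ← intervalIntegral.integral_const_mul, sub_eq_zero]
  congr 1 with ω
  rw [gaussWeightFT_eq hσ (_ - ω), gaussWeightFT_eq hσ (_ - ω)]
  have collect : ∀ x y z : ℂ, cexp x * (gaussWeightFT σ 0 * cexp y * cexp z) =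
      gaussWeightFT σ 0 * cexp (x + y + z) := by
    intro x y z
    rw [Complex.exp_add, Complex.exp_add]
    ring
  push_cast
  rw [collect, collect]
  congr 2
  have hσ' : (σ : ℂ) ≠ 0 := by exact_mod_cast hσ
  field_simp
  ring

end GaussianFilter

section Eigenbasis

variable {n : Type*} [Fintype n] [DecidableEq n]

lemma Matrix.trace_conjStarAlgAut {R : Type*} [CommRing R] [StarRing R]
    (u : unitary (Matrix n n R)) (X : Matrix n n R) :
    (Unitary.conjStarAlgAut R _ u X).trace = X.trace := by
  rw [Unitary.conjStarAlgAut_apply, trace_mul_cycle, Unitary.coe_star_mul_self, one_mul]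

lemma Matrix.IsHermitian.conjStarAlgAut_exp_smul {H : Matrix n n ℂ} (hH : H.IsHermitian) (c : ℂ) :
    Unitary.conjStarAlgAut ℂ _ (star hH.eigenvectorUnitary) (NormedSpace.exp (c • H)) =
      diagonal fun j => cexp (c * hH.eigenvalues j) := by
  have hconj : NormedSpace.exp (Unitary.conjStarAlgAut ℂ _ (star hH.eigenvectorUnitary) (c • H)) =
      Unitary.conjStarAlgAut ℂ _ (star hH.eigenvectorUnitary) (NormedSpace.exp (c • H)) := by
    simpa only [Unitary.val_toUnits_apply, Unitary.val_inv_toUnits_apply, star_star,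
      Unitary.conjStarAlgAut_star_apply, Unitary.coe_star, UnitaryGroup.inv_val]
      using Matrix.exp_units_conj (Unitary.toUnits (star hH.eigenvectorUnitary)) (c • H)
  rw [← hconj, map_smul, hH.conjStarAlgAut_star_eigenvectorUnitary, ← diagonal_smul, exp_diagonal]
  ext i j
  simp [Pi.exp_def, Complex.exp_eq_exp_ℂ]

end Eigenbasis

namespace Matrix.IsHermitian

variable {H : Matrix (Fin m) (Fin m) ℂ} (hH : H.IsHermitian)

lemma conjStarAlgAut_heis (s : ℝ) (A : Matrix (Fin m) (Fin m) ℂ) :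
    Unitary.conjStarAlgAut ℂ _ (star hH.eigenvectorUnitary) (heis H s A) =
      diagonal (fun j => cexp (I * s * hH.eigenvalues j)) *
        Unitary.conjStarAlgAut ℂ _ (star hH.eigenvectorUnitary) A *
        diagonal (fun j => cexp (-(I * s) * hH.eigenvalues j)) := by
  rw [heis, map_mul, map_mul, hH.conjStarAlgAut_exp_smul, hH.conjStarAlgAut_exp_smul]

lemma conjStarAlgAut_gibbs (β : ℝ) :
    Unitary.conjStarAlgAut ℂ _ (star hH.eigenvectorUnitary) (gibbs β H) =
      (((NormedSpace.exp ((-(β : ℂ)) • H)).trace.re)⁻¹ : ℂ) •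
        diagonal (fun j => cexp (-(β * hH.eigenvalues j))) := by
  rw [gibbs, ← Complex.coe_smul, map_smul, hH.conjStarAlgAut_exp_smul]
  simp only [neg_mul, ofReal_inv]

lemma conjStarAlgAut_smul_heis_gibbs_sub_apply (β s : ℝ) (A : Matrix (Fin m) (Fin m) ℂ)
    (a b : ℂ) (i j : Fin m) :
    Unitary.conjStarAlgAut ℂ _ (star hH.eigenvectorUnitary)
        (a • (heis H s A * gibbs β H) - b • (gibbs β H * heis H s A)) i j =
      ((NormedSpace.exp ((-(β : ℂ)) • H)).trace.re : ℂ)⁻¹ *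
        Unitary.conjStarAlgAut ℂ _ (star hH.eigenvectorUnitary) A i j *
        cexp (I * s * hH.eigenvalues i) * cexp (-(I * s) * hH.eigenvalues j) *
        (cexp (-(β * hH.eigenvalues j)) * a - cexp (-(β * hH.eigenvalues i)) * b) := by
  rw [map_sub, map_smul, map_smul, map_mul, map_mul, hH.conjStarAlgAut_heis, hH.conjStarAlgAut_gibbs]
  simp only [Matrix.sub_apply, Matrix.smul_apply, Matrix.smul_mul, Matrix.mul_smul, mul_diagonal,
    diagonal_mul, smul_eq_mul]
  ring

lemma trace_mul_smul_heis_gibbs_sub_eq_sum (β t : ℝ) (W A : Matrix (Fin m) (Fin m) ℂ) :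
    ∃ c : Fin m → Fin m → ℂ, ∀ (a b : ℂ) (t' : ℝ),
      (W * (a • (heis H (t' + t) A * gibbs β H) - b • (gibbs β H * heis H (t' + t) A))).trace =
        ∑ i, ∑ j, c i j * (cexp (I * (hH.eigenvalues j - hH.eigenvalues i : ℝ) * t') *
          (cexp (-(β * hH.eigenvalues i)) * a - cexp (-(β * hH.eigenvalues j)) * b)) := by
  set φ := Unitary.conjStarAlgAut ℂ (Matrix (Fin m) (Fin m) ℂ) (star hH.eigenvectorUnitary)
  set z : ℂ := ((NormedSpace.exp ((-(β : ℂ)) • H)).trace.re : ℂ)⁻¹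
  refine ⟨fun i j => z * φ W i j * φ A j i *
    cexp (I * t * hH.eigenvalues j) * cexp (-(I * t) * hH.eigenvalues i), fun a b t' => ?_⟩
  rw [← trace_conjStarAlgAut (star hH.eigenvectorUnitary), map_mul, trace]
  simp only [diag, mul_apply, hH.conjStarAlgAut_smul_heis_gibbs_sub_apply]
  refine Finset.sum_congr rfl fun i _ => Finset.sum_congr rfl fun j _ => ?_
  have phase : cexp (I * (t' + t : ℝ) * hH.eigenvalues j) *
      cexp (-(I * (t' + t : ℝ)) * hH.eigenvalues i) =
      cexp (I * t * hH.eigenvalues j) * cexp (-(I * t) * hH.eigenvalues i) *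
        cexp (I * (hH.eigenvalues j - hH.eigenvalues i : ℝ) * t') := by
    simp only [← Complex.exp_add]
    congr 1
    push_cast
    ring
  linear_combination (φ W i j * z * φ A j i * (cexp (-(β * hH.eigenvalues i)) * a -
    cexp (-(β * hH.eigenvalues j)) * b)) * phase

end Matrix.IsHermitian

theorem Qobs_eq_zero_of_eq_general (H G O A : Matrix (Fin m) (Fin m) ℂ)
    (hH : H.IsHermitian)
    (σ Ω β : ℝ) (hσ : 0 < σ) :
    Qobs σ Ω β H G H O A = 0 := by
  suffices inner : ∀ t : ℝ, ∫ t' : ℝ, (heis G t Oᴴ * (hPlus σ β Ω t' • (heis H (t' + t) A *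
      gibbs β H) - hMinus σ β Ω t' • (gibbs β H * heis H (t' + t) A))).trace = 0 by
    simp only [Qobs, inner, zero_mul, integral_zero, mul_zero]
  intro t
  obtain ⟨c, hc⟩ := hH.trace_mul_smul_heis_gibbs_sub_eq_sum β t (heis G t Oᴴ) A
  have hint : ∀ i j, Integrable fun t' : ℝ => c i j *
      (cexp (I * (hH.eigenvalues j - hH.eigenvalues i : ℝ) * t') *
        (cexp (-(β * hH.eigenvalues i)) * hPlus σ β Ω t' -
          cexp (-(β * hH.eigenvalues j)) * hMinus σ β Ω t')) :=
    fun i j => (integrable_cexp_mul_hPlus_sub_hMinus β Ω _ _ hσ.ne').const_mul _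
  simp_rw [hc]
  rw [integral_finsetSum _ fun i _ => integrable_finsetSum _ fun j _ => hint i j]
  refine Finset.sum_eq_zero fun i _ => ?_
  rw [integral_finsetSum _ fun j _ => hint i j]
  refine Finset.sum_eq_zero fun j _ => ?_
  rw [integral_const_mul, integral_cexp_mul_hPlus_sub_hMinus β Ω _ _ hσ.ne', mul_zero]

/-- **Existence of a global perfect guess:** the identifiability observable vanishes
identically when the test Hamiltonian equals the ground truth: `Q(O, G, A, H) = 0`
for every Hermitian `G` and all matrices `O, A`. -/
theorem Qobs_eq_zero_of_eq (H G O A : Matrix (Fin m) (Fin m) ℂ)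
    (hH : H.IsHermitian) (hG : G.IsHermitian)
    (σ Ω β : ℝ) (hσ : 0 < σ) (hΩ : 0 < Ω) (hβ : 0 < β) :
    Qobs σ Ω β H G H O A = 0 :=
  Qobs_eq_zero_of_eq_general H G O A hH σ Ω β hσ
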